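/- Let p, q, k be as usual (gcd(p,q)=1, gcd(p,k)=1, 1 ≤ k < p), with i_1 < ... < i_k the indices where iq mod p < k, c(i_j) = -i_j k + pj, e = min_j (c(i_j) - p), d(i_j) the residue of c(i_j) - p - e mod k, and m(i_j) = (c(i_j) - p - e - d(i_j))/k the multiplicity. Then the normalized polynomial G_Y(t) := t^{-e} F_Y(t) = Σ_{j=1}^k t^{d(i_j) + m(i_j)k} factors as G_Y(t) = [k]·(1 + (t-1)·Σ_{j : m(i_j) > 0} t^{d(i_j)}·[m(i_j)]^k), where [h]^n := Σ_{a=0}^{h-1} t^{an} and [k] = Σ_{a=0}^{k-1} t^a. -/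

import Mathlib

open LaurentPolynomial

/-- `E(i) = 1` iff the residue of `i*q` modulo `p` lies in `{0,...,k-1}`. -/
def Efn (p q k i : ℕ) : ℕ := if (i * q) % p < k then 1 else 0

/-- `s(i) = E(1) + ⋯ + E(i)`. -/
def sfn (p q k i : ℕ) : ℕ := ∑ j ∈ Finset.Icc 1 i, Efn p q k j

/-- `c(i) = -i·k + p·s(i)`. -/
def cfn (p q k i : ℕ) : ℤ := -(i * k : ℤ) + p * sfn p q k i

/-!
Write `c(i) - p - e = d(i) + m(i) k`. Since `t^{d + m k} = t^d + t^d (t^k - 1) [m]^k` and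
`t^k - 1 = [k] (t - 1)`, the identity reduces to `∑_j t^{d(i_j)} = [k]`, i.e. to the residues
`d(i_j)` running over `{0, …, k-1}`. Now `c(i_j) = p j - i_j k ≡ p j (mod k)`, so
`d(i_j) ≡ p j - p - e (mod k)`; as `j` runs over `1, …, k` and `p` is a unit mod `k`, the `d(i_j)`
are pairwise distinct, and there are `k` of them because `i ↦ i q mod p` permutes the residues
mod `p`.
-/

open Finset

section Geometric

variable {R : Type*} [CommRing R]

lemma geom_sum_T_mul (n : ℕ) (c : ℤ) :
    (∑ a ∈ range n, (T (a * c) : R[T;T⁻¹])) * (T c - 1) = T (n * c) - 1 := by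
  simpa only [T_pow] using geom_sum_mul (T c : R[T;T⁻¹]) n

theorem sum_T_add_mul_eq_mul {ι : Type*} (s : Finset ι) (k : ℕ) (d m : ι → ℕ)
    (hd : ∑ i ∈ s, (T (d i : ℤ) : R[T;T⁻¹]) = ∑ a ∈ range k, T (a : ℤ)) :
    ∑ i ∈ s, (T (d i + m i * k : ℤ) : R[T;T⁻¹]) =
      (∑ a ∈ range k, T (a : ℤ)) * (1 + (T 1 - 1) * ∑ i ∈ s with 0 < m i,
        T (d i : ℤ) * ∑ a ∈ range (m i), T ((a * k : ℕ) : ℤ)) := by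
  have hk : (∑ a ∈ range k, (T (a : ℤ) : R[T;T⁻¹])) * (T 1 - 1) = T k - 1 := by
    simpa using geom_sum_T_mul (R := R) k 1
  have hm (i : ι) : (T k - 1) * (T (d i : ℤ) * ∑ a ∈ range (m i), T ((a * k : ℕ) : ℤ))
      = (T (d i + m i * k : ℤ) - T (d i : ℤ) : R[T;T⁻¹]) := by
    push_cast
    rw [mul_left_comm, mul_comm (T (k : ℤ) - 1), geom_sum_T_mul, T_add]
    ring
  have hfilter : ∑ i ∈ s with 0 < m i, (T (d i + m i * k : ℤ) - T (d i : ℤ) : R[T;T⁻¹])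
      = ∑ i ∈ s, (T (d i + m i * k : ℤ) - T (d i : ℤ)) :=
    sum_filter_of_ne fun i _ hne ↦ Nat.pos_of_ne_zero fun h0 ↦ hne (by simp [h0])
  rw [mul_add, mul_one, ← mul_assoc, hk, mul_sum]
  simp only [hm, hfilter, sum_sub_distrib, hd]
  ring

end Geometric

section Marked

variable {p q k : ℕ}

lemma Efn_eq_one_iff {i : ℕ} : Efn p q k i = 1 ↔ i * q % p < k := by
  unfold Efn; split_ifs <;> simp_all

lemma mul_mod_injOn_Icc (hpq : p.Coprime q) : Set.InjOn (fun i ↦ i * q % p) (Icc 1 p) := by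
  intro a ha b hb hab
  simp only [coe_Icc, Set.mem_Icc] at ha hb
  refine (Nat.ModEq.cancel_right_of_coprime hpq hab).eq_of_abs_lt ?_
  rw [abs_sub_lt_iff]
  omega

lemma image_mul_mod_Icc (hpq : p.Coprime q) : (Icc 1 p).image (fun i ↦ i * q % p) = range p := by
  refine eq_of_subset_of_card_le (image_subset_iff.2 fun i hi ↦ mem_range.2 (Nat.mod_lt _ ?_)) ?_
  · simp only [mem_Icc] at hi; omega
  · rw [card_image_of_injOn (mul_mod_injOn_Icc hpq)]; simp

lemma card_filter_Efn_eq_one (hpq : p.Coprime q) (hkp : k ≤ p) :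
    #{i ∈ Icc 1 p | Efn p q k i = 1} = k := by
  have himage : {i ∈ Icc 1 p | Efn p q k i = 1}.image (fun i ↦ i * q % p) = range k := by
    rw [filter_congr fun _ _ ↦ Efn_eq_one_iff, ← filter_image (p := (· < k)), image_mul_mod_Icc hpq]
    ext; simp only [mem_filter, mem_range]; omega
  rw [← card_image_of_injOn ((mul_mod_injOn_Icc hpq).mono (filter_subset _ _)), himage,
    card_range]

lemma sfn_succ (i : ℕ) : sfn p q k (i + 1) = sfn p q k i + Efn p q k (i + 1) :=
  sum_Icc_succ_top (by omega) _

lemma sfn_mono : Monotone (sfn p q k) := fun _ _ h ↦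
  sum_le_sum_of_subset (Icc_subset_Icc_right h)

lemma sfn_lt_sfn {i j : ℕ} (hij : i < j) (hj : Efn p q k j = 1) : sfn p q k i < sfn p q k j := by
  obtain ⟨j, rfl⟩ := Nat.exists_eq_add_of_lt hij
  rw [sfn_succ, hj]
  have := sfn_mono (p := p) (q := q) (k := k) (Nat.le_add_right i j)
  omega

lemma sfn_strictMonoOn : StrictMonoOn (sfn p q k) {i | Efn p q k i = 1} :=
  fun _ _ _ hj hij ↦ sfn_lt_sfn hij hj

lemma sfn_self : sfn p q k p = #{i ∈ Icc 1 p | Efn p q k i = 1} := by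
  rw [card_filter]
  exact sum_congr rfl fun i _ ↦ by unfold Efn; split_ifs <;> simp_all

lemma sfn_mem_Icc (hpq : p.Coprime q) (hkp : k ≤ p) {i : ℕ}
    (hi : i ∈ {i ∈ Icc 1 p | Efn p q k i = 1}) : sfn p q k i ∈ Icc 1 k := by
  rw [mem_filter, mem_Icc] at hi
  have hpos : sfn p q k 0 < sfn p q k i := sfn_lt_sfn (by omega) hi.2
  have hle : sfn p q k i ≤ sfn p q k p := sfn_mono hi.1.2
  rw [sfn_self, card_filter_Efn_eq_one hpq hkp] at hle
  exact mem_Icc.2 ⟨hpos, hle⟩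

lemma injOn_of_cfn_sub_eq (hpq : p.Coprime q) (hpk : p.Coprime k) (hkp : k ≤ p) {e : ℤ}
    {d m : ℕ → ℕ}
    (hcdm : ∀ i ∈ {i ∈ Icc 1 p | Efn p q k i = 1}, cfn p q k i - p - e = d i + m i * k) :
    Set.InjOn d ({i ∈ Icc 1 p | Efn p q k i = 1} : Finset ℕ) := by
  intro i hi j hj hij
  rw [mem_coe] at hi hj
  have hdvd : (k : ℤ) ∣ p * ((sfn p q k i : ℤ) - sfn p q k j) := by
    refine ⟨m i - m j + i - j, ?_⟩
    have hci := hcdm i hi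
    have hcj := hcdm j hj
    rw [cfn, hij] at hci
    rw [cfn] at hcj
    linear_combination hci - hcj
  have hsi := mem_Icc.1 (sfn_mem_Icc hpq hkp hi)
  have hsj := mem_Icc.1 (sfn_mem_Icc hpq hkp hj)
  have hs : (sfn p q k i : ℤ) - sfn p q k j = 0 :=
    Int.eq_zero_of_abs_lt_dvd ((Nat.isCoprime_iff_coprime.2 hpk.symm).dvd_of_dvd_mul_left hdvd)
      (by rw [abs_sub_lt_iff]; omega)
  exact sfn_strictMonoOn.injOn (mem_filter.1 hi).2 (mem_filter.1 hj).2 (by omega)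

lemma sum_comp_eq_sum_range_of_cfn_sub_eq {M : Type*} [AddCommMonoid M] (hpq : p.Coprime q)
    (hpk : p.Coprime k) (hkp : k ≤ p) {e : ℤ} {d m : ℕ → ℕ}
    (hdm : ∀ i ∈ {i ∈ Icc 1 p | Efn p q k i = 1}, d i < k ∧ cfn p q k i - p - e = d i + m i * k)
    (f : ℕ → M) : ∑ i ∈ {i ∈ Icc 1 p | Efn p q k i = 1}, f (d i) = ∑ a ∈ range k, f a := by
  have hinj := injOn_of_cfn_sub_eq hpq hpk hkp fun i hi ↦ (hdm i hi).2
  have himage : {i ∈ Icc 1 p | Efn p q k i = 1}.image d = range k :=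
    eq_of_subset_of_card_le (image_subset_iff.2 fun i hi ↦ mem_range.2 (hdm i hi).1) <| by
      rw [card_image_of_injOn hinj, card_filter_Efn_eq_one hpq hkp, card_range]
  rw [← himage, sum_image hinj]

end Marked

theorem stmt11_general (p q k : ℕ) (hpq : Nat.Coprime p q)
    (hpk : Nat.Coprime p k) (hkp : k < p)
    (e : ℤ)
    (d m : ℕ → ℕ)
    (hdm : ∀ i ∈ (Finset.Icc 1 p).filter (fun i => Efn p q k i = 1),
        d i < k ∧ cfn p q k i - p - e = d i + m i * k) :
    ∑ i ∈ (Finset.Icc 1 p).filter (fun i => Efn p q k i = 1),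
        (T (cfn p q k i - p - e) : LaurentPolynomial ℤ)
      = (∑ a ∈ Finset.range k, (T (a : ℤ) : LaurentPolynomial ℤ)) *
        (1 + (T 1 - 1) *
          ∑ i ∈ ((Finset.Icc 1 p).filter (fun i => Efn p q k i = 1)).filter
              (fun i => 0 < m i),
            T (d i : ℤ) * ∑ a ∈ Finset.range (m i), T ((a * k : ℕ) : ℤ)) := by
  rw [sum_congr rfl fun i hi ↦ congrArg T (hdm i hi).2]
  exact sum_T_add_mul_eq_mul _ k d m <|
    sum_comp_eq_sum_range_of_cfn_sub_eq hpq hpk hkp.le hdm fun a ↦ T (a : ℤ)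

theorem stmt11 (p q k : ℕ) (hp : 0 < p) (hq : 0 < q) (hpq : Nat.Coprime p q)
    (hpk : Nat.Coprime p k) (hk : 1 ≤ k) (hkp : k < p)
    (e : ℤ)
    (he : IsLeast {x : ℤ | ∃ i ∈ (Finset.Icc 1 p).filter (fun i => Efn p q k i = 1),
        x = cfn p q k i - p} e)
    (d m : ℕ → ℕ)
    (hdm : ∀ i ∈ (Finset.Icc 1 p).filter (fun i => Efn p q k i = 1),
        d i < k ∧ cfn p q k i - p - e = d i + m i * k) :
    ∑ i ∈ (Finset.Icc 1 p).filter (fun i => Efn p q k i = 1),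
        (T (cfn p q k i - p - e) : LaurentPolynomial ℤ)
      = (∑ a ∈ Finset.range k, (T (a : ℤ) : LaurentPolynomial ℤ)) *
        (1 + (T 1 - 1) *
          ∑ i ∈ ((Finset.Icc 1 p).filter (fun i => Efn p q k i = 1)).filter
              (fun i => 0 < m i),
            T (d i : ℤ) * ∑ a ∈ Finset.range (m i), T ((a * k : ℕ) : ℤ)) :=
  stmt11_general p q k hpq hpk hkp e d m hdm
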